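/- The resolvent set ρ_NED(A) is open in (0,∞): if γ ∈ ρ_NED(A), so that the weighted system x_{k+1} = (1/γ)A_k x_k admits a strong nonuniform exponential dichotomy with constants K ≥ 1, 0 < α < 1, ε ≥ 1, then with β := √α one has (βγ, γ/β) ⊆ ρ_NED(A), and moreover S_ζ(l) = S_γ(l) and U_ζ(l) = U_γ(l) for all ζ ∈ (βγ, γ/β) and all l ∈ ℤ. -/
import Mathlib

open Matrix

attribute [local instance] Matrix.linftyOpNormedAddCommGroup

abbrev Mat (N : ℕ) := Matrix (Fin N) (Fin N) ℝ

noncomputable def fundSolNat {N : ℕ} (A : ℤ → GL (Fin N) ℝ) : ℕ → GL (Fin N) ℝ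
  | 0 => 1
  | n + 1 => A (n : ℤ) * fundSolNat A n

noncomputable def fundSolNeg {N : ℕ} (A : ℤ → GL (Fin N) ℝ) : ℕ → GL (Fin N) ℝ
  | 0 => (A (-1))⁻¹
  | n + 1 => (A (Int.negSucc (n + 1)))⁻¹ * fundSolNeg A n

noncomputable def fundSol {N : ℕ} (A : ℤ → GL (Fin N) ℝ) : ℤ → GL (Fin N) ℝ
  | Int.ofNat n => fundSolNat A n
  | Int.negSucc n => fundSolNeg A n

/-- The evolution operator `Φ(k,l)` of `x_{k+1} = A_k x_k`. -/
noncomputable def evol {N : ℕ} (A : ℤ → GL (Fin N) ℝ) (k l : ℤ) : Mat N :=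
  ↑(fundSol A k * (fundSol A l)⁻¹)

def IsInvariantProjector {N : ℕ} (A : ℤ → GL (Fin N) ℝ) (P : ℤ → Mat N) : Prop :=
  (∀ k, P k * P k = P k) ∧ ∀ k, P (k + 1) * (A k : Mat N) = (A k : Mat N) * P k

/-- Evolution operator `Φ_γ(k,l) = γ^{-(k-l)} Φ(k,l)` of `x_{k+1} = (1/γ) A_k x_k`. -/
noncomputable def evolW {N : ℕ} (A : ℤ → GL (Fin N) ℝ) (γ : ℝ) (k l : ℤ) : Mat N :=
  γ ^ (l - k) • evol A k l

def NEDWith {N : ℕ} (A : ℤ → GL (Fin N) ℝ) (γ : ℝ) (P : ℤ → Mat N) (K α ε : ℝ) : Prop :=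
  IsInvariantProjector A P ∧ 1 ≤ K ∧ 0 < α ∧ α < 1 ∧ 1 ≤ ε ∧
    (∀ k l : ℤ, l ≤ k → ‖evolW A γ k l * P l‖ ≤ K * α ^ (k - l) * ε ^ l) ∧
    (∀ k l : ℤ, k ≤ l → ‖evolW A γ k l * (1 - P l)‖ ≤ K * (1 / α) ^ (k - l) * ε ^ l)

def HasNED {N : ℕ} (A : ℤ → GL (Fin N) ℝ) (γ : ℝ) : Prop :=
  ∃ P K α ε, NEDWith A γ P K α ε

def HasStrongNED {N : ℕ} (A : ℤ → GL (Fin N) ℝ) (γ : ℝ) : Prop :=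
  ∃ P K α ε, NEDWith A γ P K α ε ∧ α * ε ^ 2 < 1

def HasED {N : ℕ} (A : ℤ → GL (Fin N) ℝ) (γ : ℝ) : Prop :=
  ∃ P K α, NEDWith A γ P K α 1

def SigmaNED {N : ℕ} (A : ℤ → GL (Fin N) ℝ) : Set ℝ := {γ | 0 < γ ∧ ¬ HasStrongNED A γ}

def rhoNED {N : ℕ} (A : ℤ → GL (Fin N) ℝ) : Set ℝ := {γ | 0 < γ ∧ HasStrongNED A γ}

def SigmaED {N : ℕ} (A : ℤ → GL (Fin N) ℝ) : Set ℝ := {γ | 0 < γ ∧ ¬ HasED A γ}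

def stableSet {N : ℕ} (A : ℤ → GL (Fin N) ℝ) (γ ε : ℝ) (l : ℤ) : Set (Fin N → ℝ) :=
  {ξ | ∃ C : ℝ, ∀ k : ℤ, l ≤ k → ‖(evol A k l).mulVec ξ‖ * γ ^ (-k) * ε ^ (-l) ≤ C}

def unstableSet {N : ℕ} (A : ℤ → GL (Fin N) ℝ) (γ ε : ℝ) (l : ℤ) : Set (Fin N → ℝ) :=
  {ξ | ∃ C : ℝ, ∀ k : ℤ, k ≤ l → ‖(evol A k l).mulVec ξ‖ * γ ^ (-k) * ε ^ (-l) ≤ C}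

/-! ### Auxiliary lemmas -/

attribute [local instance] Matrix.linftyOpNormedSpace

lemma evol_self {N : ℕ} (A : ℤ → GL (Fin N) ℝ) (l : ℤ) : evol A l l = 1 := by
  simp [evol]

lemma evol_mul {N : ℕ} (A : ℤ → GL (Fin N) ℝ) (k j l : ℤ) :
    evol A k j * evol A j l = evol A k l := by
  unfold evol
  rw [← Units.val_mul]
  congr 1
  group

lemma evolW_self {N : ℕ} (A : ℤ → GL (Fin N) ℝ) (γ : ℝ) (l : ℤ) : evolW A γ l l = 1 := by
  simp [evolW, evol_self]

/-- move a matrix across an invertible element -/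
lemma projConjInv {N : ℕ} (u : GL (Fin N) ℝ) (p q : Mat N)
    (h : q * (u : Mat N) = (u : Mat N) * p) :
    p * ((u⁻¹ : GL (Fin N) ℝ) : Mat N) = ((u⁻¹ : GL (Fin N) ℝ) : Mat N) * q := by
  have hui : ((u⁻¹ : GL (Fin N) ℝ) : Mat N) * (u : Mat N) = 1 := by
    rw [← Units.val_mul, inv_mul_cancel, Units.val_one]
  have hiu : (u : Mat N) * ((u⁻¹ : GL (Fin N) ℝ) : Mat N) = 1 := by
    rw [← Units.val_mul, mul_inv_cancel, Units.val_one]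
  have hp : p = ((u⁻¹ : GL (Fin N) ℝ) : Mat N) * q * (u : Mat N) := by
    rw [mul_assoc, h, ← mul_assoc, hui, one_mul]
  rw [hp, mul_assoc, mul_assoc, hiu, mul_one]

lemma fundSol_comm {N : ℕ} {A : ℤ → GL (Fin N) ℝ} {P : ℤ → Mat N}
    (hP : IsInvariantProjector A P) (k : ℤ) :
    P k * (fundSol A k : Mat N) = (fundSol A k : Mat N) * P 0 := by
  obtain ⟨-, hinv⟩ := hP
  cases k with
  | ofNat n =>
    show P (Int.ofNat n) * (fundSolNat A n : Mat N) = (fundSolNat A n : Mat N) * P 0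
    induction n with
    | zero => simp [fundSolNat]
    | succ n ih =>
      have h1 : P (Int.ofNat (n+1)) * (A (n : ℤ) : Mat N) = (A (n : ℤ) : Mat N) * P (Int.ofNat n) := by
        have := hinv (n : ℤ)
        simpa [Int.ofNat_eq_coe] using this
      show P (Int.ofNat (n+1)) * ((A (n:ℤ) * fundSolNat A n : GL (Fin N) ℝ) : Mat N)
          = ((A (n:ℤ) * fundSolNat A n : GL (Fin N) ℝ) : Mat N) * P 0
      rw [Units.val_mul, ← mul_assoc, h1, mul_assoc, ih, ← mul_assoc]
  | negSucc n =>
    show P (Int.negSucc n) * (fundSolNeg A n : Mat N) = (fundSolNeg A n : Mat N) * P 0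
    induction n with
    | zero =>
      have h1 : P 0 * (A (-1) : Mat N) = (A (-1) : Mat N) * P (Int.negSucc 0) := by
        have h := hinv (-1)
        have e0 : (-1 : ℤ) + 1 = 0 := by norm_num
        have e1 : Int.negSucc 0 = -1 := rfl
        rw [e0] at h
        rw [e1, h]
      exact projConjInv (A (-1)) _ _ h1
    | succ n ih =>
      have hidx : Int.negSucc (n + 1) + 1 = Int.negSucc n := by
        simp [Int.negSucc_eq]
      have h1 : P (Int.negSucc n) * (A (Int.negSucc (n+1)) : Mat N)
          = (A (Int.negSucc (n+1)) : Mat N) * P (Int.negSucc (n+1)) := by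
        have := hinv (Int.negSucc (n+1))
        rwa [hidx] at this
      have h2 := projConjInv (A (Int.negSucc (n+1))) _ _ h1
      show P (Int.negSucc (n+1)) * (((A (Int.negSucc (n+1)))⁻¹ * fundSolNeg A n : GL (Fin N) ℝ) : Mat N)
          = (((A (Int.negSucc (n+1)))⁻¹ * fundSolNeg A n : GL (Fin N) ℝ) : Mat N) * P 0
      rw [Units.val_mul, ← mul_assoc, h2, mul_assoc, ih, ← mul_assoc]

lemma evol_comm {N : ℕ} {A : ℤ → GL (Fin N) ℝ} {P : ℤ → Mat N}
    (hP : IsInvariantProjector A P) (k l : ℤ) :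
    P k * evol A k l = evol A k l * P l := by
  have hk := fundSol_comm hP k
  have hl := fundSol_comm hP l
  have hl' : P 0 * ((fundSol A l)⁻¹ : GL (Fin N) ℝ) = (((fundSol A l)⁻¹ : GL (Fin N) ℝ) : Mat N) * P l :=
    projConjInv (fundSol A l) _ _ hl
  show P k * ((fundSol A k * (fundSol A l)⁻¹ : GL (Fin N) ℝ) : Mat N)
      = ((fundSol A k * (fundSol A l)⁻¹ : GL (Fin N) ℝ) : Mat N) * P l
  rw [Units.val_mul, ← mul_assoc, hk, mul_assoc, hl', ← mul_assoc]

lemma evol_comm' {N : ℕ} {A : ℤ → GL (Fin N) ℝ} {P : ℤ → Mat N}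
    (hP : IsInvariantProjector A P) (k l : ℤ) :
    (1 - P k) * evol A k l = evol A k l * (1 - P l) := by
  rw [sub_mul, mul_sub, one_mul, mul_one, evol_comm hP]

lemma norm_evolW_mul {N : ℕ} (A : ℤ → GL (Fin N) ℝ) {g : ℝ} (hg : 0 < g) (k l : ℤ)
    (M : Mat N) : ‖evolW A g k l * M‖ = g ^ (l - k) * ‖evol A k l * M‖ := by
  rw [evolW, smul_mul_assoc, norm_smul, Real.norm_eq_abs, abs_of_pos (zpow_pos hg _)]

lemma zpow_mono_base {x y : ℝ} (hx : 0 ≤ x) (hxy : x ≤ y) {n : ℤ} (hn : 0 ≤ n) :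
    x ^ n ≤ y ^ n := by
  lift n to ℕ using hn
  rw [zpow_natCast, zpow_natCast]
  exact pow_le_pow_left₀ hx hxy _

lemma aux_shift {g x y : ℝ} {k l : ℤ} (hg : 0 < g) (h : g ^ (l - k) * x ≤ y) :
    x ≤ g ^ (k - l) * y := by
  have h1 : g ^ (k - l) * g ^ (l - k) = 1 := by
    rw [← zpow_add₀ hg.ne']
    simp
  calc x = g ^ (k - l) * (g ^ (l - k) * x) := by rw [← mul_assoc, h1, one_mul]
    _ ≤ g ^ (k - l) * y := by
        exact mul_le_mul_of_nonneg_left h (zpow_pos hg _).le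

/-- From a NED with `ε = 1`, unweighted bounds. -/
lemma ned_evol_bounds {N : ℕ} {A : ℤ → GL (Fin N) ℝ} {g K a : ℝ} {P : ℤ → Mat N}
    (hg : 0 < g) (h : NEDWith A g P K a 1) :
    (∀ k l : ℤ, l ≤ k → ‖evol A k l * P l‖ ≤ K * (a * g) ^ (k - l)) ∧
    (∀ k l : ℤ, k ≤ l → ‖evol A k l * (1 - P l)‖ ≤ K * (g / a) ^ (k - l)) := by
  obtain ⟨hP, hK, ha0, ha1, -, hS, hU⟩ := h
  constructor
  · intro k l hlk
    have := hS k l hlk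
    rw [norm_evolW_mul A hg, _root_.one_zpow, mul_one] at this
    have h2 := aux_shift hg this
    calc ‖evol A k l * P l‖ ≤ g ^ (k-l) * (K * a ^ (k-l)) := h2
      _ = K * (a * g) ^ (k - l) := by rw [mul_zpow]; ring
  · intro k l hkl
    have := hU k l hkl
    rw [norm_evolW_mul A hg, _root_.one_zpow, mul_one] at this
    have h2 := aux_shift hg this
    calc ‖evol A k l * (1 - P l)‖ ≤ g ^ (k-l) * (K * (1/a) ^ (k-l)) := h2
      _ = K * (g / a) ^ (k - l) := by rw [div_zpow, div_zpow, _root_.one_zpow]; ring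

lemma zpow_aux_div {c u : ℝ} (hc : c ≠ 0) (m : ℤ) :
    c ^ (-m) * u ^ m = (u / c) ^ m := by
  rw [div_zpow, div_eq_mul_inv, ← _root_.zpow_neg]
  exact mul_comm _ _

lemma norm_one_mat {N : ℕ} (hN : 0 < N) : ‖(1 : Mat N)‖ = 1 := by
  haveI : Nonempty (Fin N) := ⟨⟨0, hN⟩⟩
  rw [← Matrix.diagonal_one, Matrix.linfty_opNorm_diagonal]
  simp [pi_norm_const]

/-- Characterization of the stable set for a NED with `ε = 1`. -/
lemma stable_char {N : ℕ} {A : ℤ → GL (Fin N) ℝ} {g K a : ℝ} {P : ℤ → Mat N}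
    (hg : 0 < g) (hned : NEDWith A g P K a 1) (l : ℤ) :
    stableSet A g 1 l = {ξ | P l *ᵥ ξ = ξ} := by
  obtain ⟨hB1, hB2⟩ := ned_evol_bounds hg hned
  obtain ⟨hP, hK, ha0, ha1, -, -, -⟩ := hned
  ext ξ
  simp only [stableSet, Set.mem_setOf_eq]
  constructor
  · rintro ⟨C, hC⟩
    have hC0 : 0 ≤ C := le_trans (by positivity) (hC l le_rfl)
    have hC' : ∀ k : ℤ, l ≤ k → ‖evol A k l *ᵥ ξ‖ ≤ C * g ^ k := by
      intro k hk
      have h := hC k hk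
      rw [_root_.one_zpow, mul_one] at h
      have hgk : (0:ℝ) < g ^ k := zpow_pos hg _
      calc ‖evol A k l *ᵥ ξ‖ = (‖evol A k l *ᵥ ξ‖ * g ^ (-k)) * g ^ k := by
            rw [mul_assoc, ← zpow_add₀ hg.ne']; simp
        _ ≤ C * g ^ k := mul_le_mul_of_nonneg_right h hgk.le
    have hv : ∀ n : ℕ, ‖(1 - P l) *ᵥ ξ‖ ≤ (K * C * g ^ l) * a ^ n := by
      intro n
      set k : ℤ := l + n with hkdef
      have hlk : l ≤ k := by omega
      have hstep : (evol A l k * (1 - P k)) *ᵥ (evol A k l *ᵥ ξ) = (1 - P l) *ᵥ ξ := by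
        rw [mulVec_mulVec, mul_assoc, evol_comm' hP, ← mul_assoc, evol_mul, evol_self, one_mul]
      have e1 : (g / a) ^ (l - k) = g ^ (l - k) * a ^ (k - l) := by
        rw [div_zpow, div_eq_mul_inv, ← _root_.zpow_neg, neg_sub]
      have e2 : g ^ (l - k) * g ^ k = g ^ l := by
        rw [← zpow_add₀ hg.ne']; congr 1; omega
      have e3 : a ^ (k - l) = a ^ (n : ℤ) := by congr 1; omega
      calc ‖(1 - P l) *ᵥ ξ‖ = ‖(evol A l k * (1 - P k)) *ᵥ (evol A k l *ᵥ ξ)‖ := by rw [hstep]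
        _ ≤ ‖evol A l k * (1 - P k)‖ * ‖evol A k l *ᵥ ξ‖ := Matrix.linfty_opNorm_mulVec _ _
        _ ≤ (K * (g / a) ^ (l - k)) * (C * g ^ k) :=
            mul_le_mul (hB2 l k hlk) (hC' k hlk) (norm_nonneg _)
              (by have := zpow_pos (div_pos hg ha0) (l - k); positivity)
        _ = (K * C * (g ^ (l - k) * g ^ k)) * a ^ (k - l) := by rw [e1]; ring
        _ = (K * C * g ^ l) * a ^ (n : ℤ) := by rw [e2, e3]
        _ = (K * C * g ^ l) * a ^ n := by rw [zpow_natCast]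
    have hlim : Filter.Tendsto (fun n : ℕ => (K * C * g ^ l) * a ^ n) Filter.atTop (nhds 0) := by
      have h0 := tendsto_pow_atTop_nhds_zero_of_lt_one ha0.le ha1
      simpa using h0.const_mul (K * C * g ^ l)
    have hle : ‖(1 - P l) *ᵥ ξ‖ ≤ 0 := ge_of_tendsto' hlim hv
    have h0 : (1 - P l) *ᵥ ξ = 0 := norm_le_zero_iff.mp hle
    rw [sub_mulVec, one_mulVec, sub_eq_zero] at h0
    exact h0.symm
  · intro hfix
    have hK0 : (0:ℝ) ≤ K := le_trans zero_le_one hK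
    refine ⟨K * g ^ (-l) * ‖ξ‖, ?_⟩
    intro k hk
    rw [_root_.one_zpow, mul_one]
    have h1 : ‖evol A k l *ᵥ ξ‖ ≤ K * (a * g) ^ (k - l) * ‖ξ‖ := by
      calc ‖evol A k l *ᵥ ξ‖ = ‖(evol A k l * P l) *ᵥ ξ‖ := by rw [← mulVec_mulVec, hfix]
        _ ≤ ‖evol A k l * P l‖ * ‖ξ‖ := Matrix.linfty_opNorm_mulVec _ _
        _ ≤ K * (a * g) ^ (k - l) * ‖ξ‖ :=
            mul_le_mul_of_nonneg_right (hB1 k l hk) (norm_nonneg _)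
    have e2 : g ^ (k - l) * g ^ (-k) = g ^ (-l) := by
      rw [← zpow_add₀ hg.ne']; congr 1; omega
    have ha1' : a ^ (k - l) ≤ 1 := by
      have := zpow_mono_base ha0.le ha1.le (by omega : (0:ℤ) ≤ k - l)
      rwa [_root_.one_zpow] at this
    have ha0' : (0:ℝ) ≤ a ^ (k - l) := (zpow_pos ha0 _).le
    calc ‖evol A k l *ᵥ ξ‖ * g ^ (-k)
        ≤ (K * (a * g) ^ (k - l) * ‖ξ‖) * g ^ (-k) :=
          mul_le_mul_of_nonneg_right h1 (zpow_pos hg _).le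
      _ = (K * g ^ (-l) * ‖ξ‖) * a ^ (k - l) := by rw [mul_zpow, ← e2]; ring
      _ ≤ (K * g ^ (-l) * ‖ξ‖) * 1 := by
          refine mul_le_mul_of_nonneg_left ha1' ?_
          have := zpow_pos hg (-l)
          positivity
      _ = K * g ^ (-l) * ‖ξ‖ := mul_one _

/-- Characterization of the unstable set for a NED with `ε = 1`. -/
lemma unstable_char {N : ℕ} {A : ℤ → GL (Fin N) ℝ} {g K a : ℝ} {P : ℤ → Mat N}
    (hg : 0 < g) (hned : NEDWith A g P K a 1) (l : ℤ) :
    unstableSet A g 1 l = {ξ | P l *ᵥ ξ = 0} := by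
  obtain ⟨hB1, hB2⟩ := ned_evol_bounds hg hned
  obtain ⟨hP, hK, ha0, ha1, -, -, -⟩ := hned
  ext ξ
  simp only [unstableSet, Set.mem_setOf_eq]
  constructor
  · rintro ⟨C, hC⟩
    have hC0 : 0 ≤ C := le_trans (by positivity) (hC l le_rfl)
    have hC' : ∀ k : ℤ, k ≤ l → ‖evol A k l *ᵥ ξ‖ ≤ C * g ^ k := by
      intro k hk
      have h := hC k hk
      rw [_root_.one_zpow, mul_one] at h
      have hgk : (0:ℝ) < g ^ k := zpow_pos hg _
      calc ‖evol A k l *ᵥ ξ‖ = (‖evol A k l *ᵥ ξ‖ * g ^ (-k)) * g ^ k := by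
            rw [mul_assoc, ← zpow_add₀ hg.ne']; simp
        _ ≤ C * g ^ k := mul_le_mul_of_nonneg_right h hgk.le
    have hv : ∀ n : ℕ, ‖P l *ᵥ ξ‖ ≤ (K * C * g ^ l) * a ^ n := by
      intro n
      set k : ℤ := l - n with hkdef
      have hkl : k ≤ l := by omega
      have hstep : (evol A l k * P k) *ᵥ (evol A k l *ᵥ ξ) = P l *ᵥ ξ := by
        rw [mulVec_mulVec, mul_assoc, evol_comm hP, ← mul_assoc, evol_mul, evol_self, one_mul]
      have e1 : (a * g) ^ (l - k) = a ^ (l - k) * g ^ (l - k) := mul_zpow _ _ _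
      have e2 : g ^ (l - k) * g ^ k = g ^ l := by
        rw [← zpow_add₀ hg.ne']; congr 1; omega
      have e3 : a ^ (l - k) = a ^ (n : ℤ) := by congr 1; omega
      calc ‖P l *ᵥ ξ‖ = ‖(evol A l k * P k) *ᵥ (evol A k l *ᵥ ξ)‖ := by rw [hstep]
        _ ≤ ‖evol A l k * P k‖ * ‖evol A k l *ᵥ ξ‖ := Matrix.linfty_opNorm_mulVec _ _
        _ ≤ (K * (a * g) ^ (l - k)) * (C * g ^ k) :=
            mul_le_mul (hB1 l k hkl) (hC' k hkl) (norm_nonneg _)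
              (by have := zpow_pos (mul_pos ha0 hg) (l - k); positivity)
        _ = (K * C * (g ^ (l - k) * g ^ k)) * a ^ (l - k) := by rw [e1]; ring
        _ = (K * C * g ^ l) * a ^ (n : ℤ) := by rw [e2, e3]
        _ = (K * C * g ^ l) * a ^ n := by rw [zpow_natCast]
    have hlim : Filter.Tendsto (fun n : ℕ => (K * C * g ^ l) * a ^ n) Filter.atTop (nhds 0) := by
      have h0 := tendsto_pow_atTop_nhds_zero_of_lt_one ha0.le ha1
      simpa using h0.const_mul (K * C * g ^ l)
    have hle : ‖P l *ᵥ ξ‖ ≤ 0 := ge_of_tendsto' hlim hv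
    exact norm_le_zero_iff.mp hle
  · intro hfix
    have hK0 : (0:ℝ) ≤ K := le_trans zero_le_one hK
    have hfix' : (1 - P l) *ᵥ ξ = ξ := by
      rw [sub_mulVec, one_mulVec, hfix, sub_zero]
    refine ⟨K * g ^ (-l) * ‖ξ‖, ?_⟩
    intro k hk
    rw [_root_.one_zpow, mul_one]
    have h1 : ‖evol A k l *ᵥ ξ‖ ≤ K * (g / a) ^ (k - l) * ‖ξ‖ := by
      calc ‖evol A k l *ᵥ ξ‖ = ‖(evol A k l * (1 - P l)) *ᵥ ξ‖ := by
            rw [← mulVec_mulVec, hfix']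
        _ ≤ ‖evol A k l * (1 - P l)‖ * ‖ξ‖ := Matrix.linfty_opNorm_mulVec _ _
        _ ≤ K * (g / a) ^ (k - l) * ‖ξ‖ :=
            mul_le_mul_of_nonneg_right (hB2 k l hk) (norm_nonneg _)
    have e1 : (g / a) ^ (k - l) = g ^ (k - l) * a ^ (l - k) := by
      rw [div_zpow, div_eq_mul_inv, ← _root_.zpow_neg, neg_sub]
    have e2 : g ^ (k - l) * g ^ (-k) = g ^ (-l) := by
      rw [← zpow_add₀ hg.ne']; congr 1; omega
    have ha1' : a ^ (l - k) ≤ 1 := by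
      have := zpow_mono_base ha0.le ha1.le (by omega : (0:ℤ) ≤ l - k)
      rwa [_root_.one_zpow] at this
    calc ‖evol A k l *ᵥ ξ‖ * g ^ (-k)
        ≤ (K * (g / a) ^ (k - l) * ‖ξ‖) * g ^ (-k) :=
          mul_le_mul_of_nonneg_right h1 (zpow_pos hg _).le
      _ = (K * g ^ (-l) * ‖ξ‖) * a ^ (l - k) := by rw [e1, ← e2]; ring
      _ ≤ (K * g ^ (-l) * ‖ξ‖) * 1 := by
          refine mul_le_mul_of_nonneg_left ha1' ?_
          have := zpow_pos hg (-l)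
          positivity
      _ = K * g ^ (-l) * ‖ξ‖ := mul_one _

/-- The resolvent set `ρ_NED(A)` is open in `(0,∞)`: if the weighted
system for `γ` admits a strong nonuniform exponential dichotomy with constants
`K ≥ 1`, `0 < α < 1`, `ε ≥ 1`, then with `β := √α` the whole interval `(βγ, γ/β)`
lies in `ρ_NED(A)`, and the stable and unstable fibers are constant there. -/
theorem resolvent_isOpen {N : ℕ} (A : ℤ → GL (Fin N) ℝ) (γ : ℝ) (hγ : 0 < γ)
    (P : ℤ → Mat N) (K α ε : ℝ)
    (hNED : NEDWith A γ P K α ε) (hstrong : α * ε ^ 2 < 1) :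
    Set.Ioo (Real.sqrt α * γ) (γ / Real.sqrt α) ⊆ rhoNED A ∧
    ∀ ζ ∈ Set.Ioo (Real.sqrt α * γ) (γ / Real.sqrt α), ∀ l : ℤ,
      stableSet A ζ ε l = stableSet A γ ε l ∧
      unstableSet A ζ ε l = unstableSet A γ ε l := by
  obtain ⟨hP, hK, hα0, hα1, hε, hS, hU⟩ := hNED
  have hK0 : (0:ℝ) ≤ K := le_trans zero_le_one hK
  have hs0 : 0 < Real.sqrt α := Real.sqrt_pos.mpr hα0
  have hs1 : Real.sqrt α < 1 := by
    have := Real.sqrt_lt_sqrt hα0.le hα1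
    rwa [Real.sqrt_one] at this
  have hss : Real.sqrt α * Real.sqrt α = α := Real.mul_self_sqrt hα0.le
  rcases Nat.eq_zero_or_pos N with hN | hN
  · -- trivial case `N = 0`
    subst hN
    have hnorm : ∀ M : Mat 0, ‖M‖ = 0 := fun M => by
      rw [Subsingleton.elim M 0, norm_zero]
    have hvec : ∀ v : Fin 0 → ℝ, ‖v‖ = 0 := fun v => by
      rw [Subsingleton.elim v 0, norm_zero]
    constructor
    · rintro ζ ⟨hζ1, hζ2⟩
      have hζ0 : 0 < ζ := lt_trans (mul_pos hs0 hγ) hζ1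
      refine ⟨hζ0, P, K, 1/2, 1, ⟨⟨hP, hK, by norm_num, by norm_num, le_refl 1, ?_, ?_⟩,
        by norm_num⟩⟩
      · intro k l hlk
        rw [hnorm]
        have h1 : (0:ℝ) < (1/2 : ℝ) ^ (k - l) := zpow_pos (by norm_num) _
        have h2 : (0:ℝ) < (1:ℝ) ^ l := zpow_pos one_pos _
        positivity
      · intro k l hkl
        rw [hnorm]
        have h1 : (0:ℝ) < (1 / (1/2 : ℝ)) ^ (k - l) := zpow_pos (by norm_num) _
        have h2 : (0:ℝ) < (1:ℝ) ^ l := zpow_pos one_pos _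
        positivity
    · rintro ζ ⟨hζ1, hζ2⟩ l
      have hmem : ∀ (g : ℝ), ∀ ξ : Fin 0 → ℝ,
          ξ ∈ stableSet A g ε l ∧ ξ ∈ unstableSet A g ε l := by
        intro g ξ
        constructor
        · exact ⟨0, fun k _ => by rw [hvec]; simp⟩
        · exact ⟨0, fun k _ => by rw [hvec]; simp⟩
      constructor
      · ext ξ; simp only [(hmem ζ ξ).1, (hmem γ ξ).1]
      · ext ξ; simp only [(hmem ζ ξ).2, (hmem γ ξ).2]
  · -- main case `N ≥ 1`; first show `ε = 1`
    have hε0 : (0:ℝ) < ε := lt_of_lt_of_le one_pos hε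
    have hε1 : ε = 1 := by
      by_contra hne
      have hε' : 1 < ε := lt_of_le_of_ne hε (Ne.symm hne)
      obtain ⟨n, hn⟩ := pow_unbounded_of_one_lt (2 * K) hε'
      have hPl := hS (-(n:ℤ)) (-(n:ℤ)) le_rfl
      have hQl := hU (-(n:ℤ)) (-(n:ℤ)) le_rfl
      rw [evolW_self, one_mul] at hPl hQl
      simp only [sub_self, zpow_zero, mul_one, one_mul] at hPl hQl
      have hone : (1:ℝ) ≤ ‖P (-(n:ℤ))‖ + ‖1 - P (-(n:ℤ))‖ := by
        have h := norm_add_le (P (-(n:ℤ))) (1 - P (-(n:ℤ)))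
        have h2 : P (-(n:ℤ)) + (1 - P (-(n:ℤ))) = 1 := by abel
        rw [h2, norm_one_mat hN] at h
        exact h
      have h1 : (1:ℝ) ≤ 2 * K * ε ^ (-(n:ℤ)) := by linarith
      have key : ε ^ (-(n:ℤ)) * ε ^ (n:ℤ) = 1 := by
        rw [← zpow_add₀ hε0.ne']; simp
      have h2 : ε ^ (n:ℤ) ≤ 2 * K := by
        calc ε ^ (n:ℤ) = 1 * ε ^ (n:ℤ) := (one_mul _).symm
          _ ≤ (2 * K * ε ^ (-(n:ℤ))) * ε ^ (n:ℤ) :=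
              mul_le_mul_of_nonneg_right h1 (zpow_pos hε0 _).le
          _ = 2 * K * (ε ^ (-(n:ℤ)) * ε ^ (n:ℤ)) := by ring
          _ = 2 * K := by rw [key, mul_one]
      rw [zpow_natCast] at h2
      linarith
    subst hε1
    have hNED' : NEDWith A γ P K α 1 := ⟨hP, hK, hα0, hα1, le_refl 1, hS, hU⟩
    obtain ⟨hB1, hB2⟩ := ned_evol_bounds hγ hNED'
    -- for each ζ in the interval, build the new NED
    have key : ∀ ζ, ζ ∈ Set.Ioo (Real.sqrt α * γ) (γ / Real.sqrt α) →
        0 < ζ ∧ NEDWith A ζ P K (max (α*γ/ζ) (α*ζ/γ)) 1 ∧ max (α*γ/ζ) (α*ζ/γ) < 1 := by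
      rintro ζ ⟨hζ1, hζ2⟩
      have hζ0 : 0 < ζ := lt_trans (mul_pos hs0 hγ) hζ1
      have ha : α * γ / ζ < Real.sqrt α := by
        rw [div_lt_iff₀ hζ0]
        nlinarith
      have hb : α * ζ / γ < Real.sqrt α := by
        rw [div_lt_iff₀ hγ]
        have h3 : ζ * Real.sqrt α < γ := (lt_div_iff₀ hs0).mp hζ2
        nlinarith
      set α' := max (α*γ/ζ) (α*ζ/γ) with hα'def
      have hα'0 : 0 < α' := lt_max_of_lt_left (by positivity)
      have hα'1 : α' < 1 := max_lt (ha.trans hs1) (hb.trans hs1)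
      refine ⟨hζ0, ⟨hP, hK, hα'0, hα'1, le_refl 1, ?_, ?_⟩, hα'1⟩
      · intro k l hlk
        rw [norm_evolW_mul A hζ0, _root_.one_zpow, mul_one]
        have hlk' : l - k = -(k - l) := by omega
        calc (ζ:ℝ) ^ (l - k) * ‖evol A k l * P l‖
            ≤ ζ ^ (l - k) * (K * (α * γ) ^ (k - l)) :=
              mul_le_mul_of_nonneg_left (hB1 k l hlk) (zpow_pos hζ0 _).le
          _ = K * (ζ ^ (-(k - l)) * (α * γ) ^ (k - l)) := by rw [hlk']; ring
          _ = K * (α * γ / ζ) ^ (k - l) := by rw [zpow_aux_div hζ0.ne']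
          _ ≤ K * α' ^ (k - l) := by
              refine mul_le_mul_of_nonneg_left
                (zpow_mono_base (by positivity) (le_max_left _ _) (by omega)) hK0
      · intro k l hkl
        rw [norm_evolW_mul A hζ0, _root_.one_zpow, mul_one]
        have hkl' : l - k = -(k - l) := by omega
        have einv : (γ / α / ζ) ^ (k - l) = (α * ζ / γ) ^ (l - k) := by
          rw [show γ / α / ζ = γ / (α * ζ) by ring, ← inv_div, _root_.inv_zpow', hkl']
        have einv2 : (1 / α') ^ (k - l) = α' ^ (l - k) := by
          rw [one_div, _root_.inv_zpow', hkl']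
        calc (ζ:ℝ) ^ (l - k) * ‖evol A k l * (1 - P l)‖
            ≤ ζ ^ (l - k) * (K * (γ / α) ^ (k - l)) :=
              mul_le_mul_of_nonneg_left (hB2 k l hkl) (zpow_pos hζ0 _).le
          _ = K * (ζ ^ (-(k - l)) * (γ / α) ^ (k - l)) := by rw [hkl']; ring
          _ = K * (γ / α / ζ) ^ (k - l) := by rw [zpow_aux_div hζ0.ne']
          _ = K * (α * ζ / γ) ^ (l - k) := by rw [einv]
          _ ≤ K * α' ^ (l - k) := by
              refine mul_le_mul_of_nonneg_left
                (zpow_mono_base (by positivity) (le_max_right _ _) (by omega)) hK0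
          _ = K * (1 / α') ^ (k - l) := by rw [einv2]
    constructor
    · intro ζ hζ
      obtain ⟨hζ0, hned, hlt⟩ := key ζ hζ
      exact ⟨hζ0, P, K, _, 1, hned, by simpa using hlt⟩
    · intro ζ hζ l
      obtain ⟨hζ0, hned, hlt⟩ := key ζ hζ
      constructor
      · rw [stable_char hζ0 hned l, stable_char hγ hNED' l]
      · rw [unstable_char hζ0 hned l, unstable_char hγ hNED' l]
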